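/- (Rank envelope test, boundary case.) The observed curve does not exit the global rank envelope strictly but touches it, i.e., T_low^(k_α)(r) ≤ T_1(r) ≤ T_upp^(k_α)(r) for all r ∈ I and T_1(r) = T_low^(k_α)(r) or T_1(r) = T_upp^(k_α)(r) for some r ∈ I, if and only if p_- ≤ α < p_+. -/

import Mathlib

open Finset

/-- The upward pointwise rank `R_i^↑(r) = #{j : T_j(r) ≤ T_i(r)}`. -/
noncomputable def upRank {s : ℕ} {ι : Type*} (T : Fin (s + 1) → ι → ℝ) (i : Fin (s + 1)) (r : ι) : ℕ :=
  {j : Fin (s + 1) | T j r ≤ T i r}.ncard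

/-- The downward pointwise rank `R_i^↓(r) = #{j : T_j(r) ≥ T_i(r)}`. -/
noncomputable def downRank {s : ℕ} {ι : Type*} (T : Fin (s + 1) → ι → ℝ) (i : Fin (s + 1)) (r : ι) : ℕ :=
  {j : Fin (s + 1) | T i r ≤ T j r}.ncard

/-- The two-sided pointwise rank `R_i^*(r) = min(R_i^↑(r), R_i^↓(r))`. -/
noncomputable def twoSidedRank {s : ℕ} {ι : Type*} (T : Fin (s + 1) → ι → ℝ) (i : Fin (s + 1)) (r : ι) : ℕ :=
  min (upRank T i r) (downRank T i r)

/-- The extreme rank `R_i = min_{r ∈ I} R_i^*(r)`. -/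
noncomputable def extremeRank {s : ℕ} {ι : Type*} [Fintype ι] [Nonempty ι]
    (T : Fin (s + 1) → ι → ℝ) (i : Fin (s + 1)) : ℕ :=
  univ.inf' univ_nonempty (fun r => twoSidedRank T i r)

/-- The lower bound of the `k`-th envelope: the `k`-th smallest of `T_1(r), …, T_{s+1}(r)`. -/
noncomputable def envLow {s : ℕ} {ι : Type*} (T : Fin (s + 1) → ι → ℝ) (k : ℕ) (r : ι) : ℝ :=
  ((univ.image (fun i => T i r)).sort (· ≤ ·)).getD (k - 1) 0

/-- The upper bound of the `k`-th envelope: the `k`-th largest of `T_1(r), …, T_{s+1}(r)`. -/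
noncomputable def envUpp {s : ℕ} {ι : Type*} (T : Fin (s + 1) → ι → ℝ) (k : ℕ) (r : ι) : ℝ :=
  ((univ.image (fun i => T i r)).sort (· ≤ ·)).getD (s + 1 - k) 0

/-! At each point `r` the curves are strictly ordered, so the `k`-th smallest value lies weakly
below `T_i(r)` exactly when `k ≤ R_i^↑(r)`, and the `k`-th largest weakly above it exactly
when `k ≤ R_i^↓(r)`. Hence `T_1` stays in the `k`-th envelope and touches it somewhere iff
its extreme rank is exactly `k`. As `k ↦ #{i : R_i < k}` is monotone, the `k` admissible in
the definition of `k_α` form an initial segment, so `R_1 = k_α` iff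
`#{i : R_i < R_1} ≤ α(s+1) < #{i : R_i ≤ R_1}`, which is `p_- ≤ α < p_+`. -/

theorem OrderEmbedding.card_filter_image_le_apply {α : Type*} [LinearOrder α] {n : ℕ}
    (e : Fin n ↪o α) (q : Fin n) : #{y ∈ univ.image e | y ≤ e q} = q + 1 := by
  rw [filter_image, card_image_of_injective _ e.injective]
  simp only [OrderEmbedding.le_iff_le, filter_ge_eq_Iic, Fin.card_Iic]

theorem OrderEmbedding.card_filter_image_apply_le {α : Type*} [LinearOrder α] {n : ℕ}
    (e : Fin n ↪o α) (q : Fin n) : #{y ∈ univ.image e | e q ≤ y} = n - q := by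
  rw [filter_image, card_image_of_injective _ e.injective]
  simp only [OrderEmbedding.le_iff_le, filter_le_eq_Ici, Fin.card_Ici]

section SortedFinset
variable {α : Type*} [LinearOrder α] {F : Finset α} {x : α} {p : ℕ}

theorem Finset.sort_getD_eq_orderEmbOfFin (hp : p < #F) (d : α) :
    (F.sort (· ≤ ·)).getD p d = F.orderEmbOfFin rfl ⟨p, hp⟩ := by
  rw [List.getD_eq_getElem _ _ (by rwa [length_sort])]
  rfl

theorem Finset.exists_orderEmbOfFin_eq_of_mem (hx : x ∈ F) :
    ∃ q : Fin #F, F.orderEmbOfFin rfl q = x ∧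
      #{y ∈ F | y ≤ x} = q + 1 ∧ #{y ∈ F | x ≤ y} = #F - q := by
  obtain ⟨q, rfl⟩ : x ∈ Set.range (F.orderEmbOfFin rfl) := by simpa using hx
  have hle := (F.orderEmbOfFin rfl).card_filter_image_le_apply q
  have hge := (F.orderEmbOfFin rfl).card_filter_image_apply_le q
  rw [F.image_orderEmbOfFin_univ] at hle hge
  exact ⟨q, rfl, hle, hge⟩

theorem Finset.sort_getD_le_iff (hx : x ∈ F) (hp : p < #F) (d : α) :
    (F.sort (· ≤ ·)).getD p d ≤ x ↔ p < #{y ∈ F | y ≤ x} := by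
  obtain ⟨q, rfl, hle, -⟩ := exists_orderEmbOfFin_eq_of_mem hx
  rw [sort_getD_eq_orderEmbOfFin hp, OrderEmbedding.le_iff_le, hle, Fin.le_def]
  dsimp only
  omega

theorem Finset.le_sort_getD_iff (hx : x ∈ F) (hp : p < #F) (d : α) :
    x ≤ (F.sort (· ≤ ·)).getD p d ↔ #F ≤ p + #{y ∈ F | x ≤ y} := by
  obtain ⟨q, rfl, -, hge⟩ := exists_orderEmbOfFin_eq_of_mem hx
  rw [sort_getD_eq_orderEmbOfFin hp, OrderEmbedding.le_iff_le, hge, Fin.le_def]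
  have := q.isLt
  dsimp only
  omega

theorem Finset.card_filter_le_add_card_filter_ge (hx : x ∈ F) :
    #{y ∈ F | y ≤ x} + #{y ∈ F | x ≤ y} = #F + 1 := by
  obtain ⟨q, rfl, hle, hge⟩ := exists_orderEmbOfFin_eq_of_mem hx
  omega

end SortedFinset

theorem ncard_setOf_comp_eq_card_filter_image {β α : Type*} [Fintype β] [DecidableEq α]
    {f : β → α} (hf : Function.Injective f) (P : α → Prop) [DecidablePred P] :
    {b | P (f b)}.ncard = #{y ∈ univ.image f | P y} := by
  rw [filter_image, card_image_of_injective _ hf, ← Set.ncard_coe_finset, coe_filter_univ]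

section Pointwise
variable {s : ℕ} {ι : Type*} {T : Fin (s + 1) → ι → ℝ} {r : ι}

theorem apply_mem_image_univ (i : Fin (s + 1)) : T i r ∈ univ.image (T · r) :=
  mem_image_of_mem (T · r) (mem_univ i)

variable (hT : Function.Injective (T · r))
include hT

theorem upRank_eq_card (i : Fin (s + 1)) :
    upRank T i r = #{y ∈ univ.image (T · r) | y ≤ T i r} :=
  ncard_setOf_comp_eq_card_filter_image hT (· ≤ T i r)

theorem downRank_eq_card (i : Fin (s + 1)) :
    downRank T i r = #{y ∈ univ.image (T · r) | T i r ≤ y} :=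
  ncard_setOf_comp_eq_card_filter_image hT (T i r ≤ ·)

theorem card_image_eq : #(univ.image (T · r)) = s + 1 := by
  rw [card_image_of_injective _ hT, card_univ, Fintype.card_fin]

theorem upRank_add_downRank (i : Fin (s + 1)) : upRank T i r + downRank T i r = s + 2 := by
  rw [upRank_eq_card hT, downRank_eq_card hT,
    card_filter_le_add_card_filter_ge (apply_mem_image_univ i), card_image_eq hT]

variable {k : ℕ} (hk : 1 ≤ k) (hks : k ≤ s + 1)
include hk hks

theorem envLow_le_iff (i : Fin (s + 1)) : envLow T k r ≤ T i r ↔ k ≤ upRank T i r := by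
  rw [envLow, sort_getD_le_iff (apply_mem_image_univ i) (by rw [card_image_eq hT]; omega),
    ← upRank_eq_card hT]
  omega

theorem le_envLow_iff (i : Fin (s + 1)) : T i r ≤ envLow T k r ↔ upRank T i r ≤ k := by
  rw [envLow, le_sort_getD_iff (apply_mem_image_univ i) (by rw [card_image_eq hT]; omega),
    ← downRank_eq_card hT, card_image_eq hT]
  have := upRank_add_downRank hT i
  omega

theorem envUpp_le_iff (i : Fin (s + 1)) : envUpp T k r ≤ T i r ↔ downRank T i r ≤ k := by
  rw [envUpp, sort_getD_le_iff (apply_mem_image_univ i) (by rw [card_image_eq hT]; omega),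
    ← upRank_eq_card hT]
  have := upRank_add_downRank hT i
  omega

theorem le_envUpp_iff (i : Fin (s + 1)) : T i r ≤ envUpp T k r ↔ k ≤ downRank T i r := by
  rw [envUpp, le_sort_getD_iff (apply_mem_image_univ i) (by rw [card_image_eq hT]; omega),
    ← downRank_eq_card hT, card_image_eq hT]
  omega

theorem mem_envelope_iff (i : Fin (s + 1)) :
    (envLow T k r ≤ T i r ∧ T i r ≤ envUpp T k r) ↔ k ≤ twoSidedRank T i r := by
  rw [envLow_le_iff hT hk hks, le_envUpp_iff hT hk hks, twoSidedRank, le_min_iff]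

theorem mem_envelope_and_touches_iff (i : Fin (s + 1)) :
    ((envLow T k r ≤ T i r ∧ T i r ≤ envUpp T k r) ∧
      (T i r = envLow T k r ∨ T i r = envUpp T k r)) ↔ twoSidedRank T i r = k := by
  rw [le_antisymm_iff, le_antisymm_iff (a := T i r), envLow_le_iff hT hk hks,
    le_envLow_iff hT hk hks, envUpp_le_iff hT hk hks, le_envUpp_iff hT hk hks, twoSidedRank]
  omega

end Pointwise

section Extreme
variable {s : ℕ} {ι : Type*} (T : Fin (s + 1) → ι → ℝ)

theorem one_le_twoSidedRank (i : Fin (s + 1)) (r : ι) : 1 ≤ twoSidedRank T i r := by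
  have hup : 0 < upRank T i r := (Set.ncard_pos).2 ⟨i, le_refl (T i r)⟩
  have hdown : 0 < downRank T i r := (Set.ncard_pos).2 ⟨i, le_refl (T i r)⟩
  exact le_min hup hdown

theorem twoSidedRank_le (i : Fin (s + 1)) (r : ι) : twoSidedRank T i r ≤ s + 1 :=
  (min_le_left _ _).trans <| (Set.ncard_le_card _).trans (by simp)

variable [Fintype ι] [Nonempty ι]

theorem one_le_extremeRank (i : Fin (s + 1)) : 1 ≤ extremeRank T i :=
  le_inf' _ _ fun r _ => one_le_twoSidedRank T i r

theorem extremeRank_le (i : Fin (s + 1)) : extremeRank T i ≤ s + 1 :=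
  (inf'_le _ (mem_univ (Classical.arbitrary ι))).trans (twoSidedRank_le T i _)

theorem forall_mem_envelope_and_exists_touches_iff {T : Fin (s + 1) → ι → ℝ}
    (hT : ∀ r, Function.Injective (T · r)) {k : ℕ} (hk : 1 ≤ k) (hks : k ≤ s + 1)
    (i : Fin (s + 1)) :
    ((∀ r, envLow T k r ≤ T i r ∧ T i r ≤ envUpp T k r) ∧
      (∃ r, T i r = envLow T k r ∨ T i r = envUpp T k r)) ↔ extremeRank T i = k := by
  have hinside :
      (∀ r, envLow T k r ≤ T i r ∧ T i r ≤ envUpp T k r) ↔ k ≤ extremeRank T i := by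
    simp only [mem_envelope_iff (hT _) hk hks, extremeRank, le_inf'_iff, mem_univ, true_imp_iff]
  constructor
  · rintro ⟨hall, r, htouch⟩
    refine le_antisymm ?_ (hinside.1 hall)
    exact (inf'_le _ (mem_univ r)).trans
      ((mem_envelope_and_touches_iff (hT r) hk hks i).1 ⟨hall r, htouch⟩).le
  · intro h
    obtain ⟨r, -, hr⟩ := exists_mem_eq_inf' univ_nonempty (twoSidedRank T i)
    exact ⟨hinside.2 h.ge, r, ((mem_envelope_and_touches_iff (hT r) hk hks i).2 (hr ▸ h)).2⟩

end Extreme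

section CriticalRank
variable {β : Type*} [Fintype β] {R : β → ℕ} {m : ℕ}

/-- `criticalRank R m` is `k_α` for the ranks `R` and `m = α (s + 1)`. -/
noncomputable def criticalRank (R : β → ℕ) (m : ℕ) : ℕ :=
  sSup {k : ℕ | 1 ≤ k ∧ {i | R i < k}.ncard ≤ m}

variable (hR : ∀ i, 1 ≤ R i) (hm : m < Fintype.card β)
include hR hm

theorem le_criticalRank_iff {k : ℕ} (hk : 1 ≤ k) :
    k ≤ criticalRank R m ↔ {i | R i < k}.ncard ≤ m := by
  set S := {k : ℕ | 1 ≤ k ∧ {i | R i < k}.ncard ≤ m}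
  have hbdd : BddAbove S := by
    refine ⟨univ.sup R, fun k hk => ?_⟩
    by_contra! hlt
    have huniv : {i | R i < k} = Set.univ :=
      Set.eq_univ_of_forall fun i => (le_sup (mem_univ i)).trans_lt hlt
    have := hk.2
    rw [huniv, Set.ncard_univ, Nat.card_eq_fintype_card] at this
    omega
  have hone : 1 ∈ S := ⟨le_rfl, by simp [fun i => not_lt.2 (hR i)]⟩
  refine ⟨fun hle => ?_, fun h => le_csSup hbdd ⟨hk, h⟩⟩
  have hmem : criticalRank R m ∈ S := Nat.sSup_mem ⟨1, hone⟩ hbdd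
  exact (Set.ncard_le_ncard fun i (hi : R i < k) => hi.trans_le hle).trans hmem.2

theorem one_le_criticalRank : 1 ≤ criticalRank R m :=
  (le_criticalRank_iff hR hm le_rfl).2 (by simp [fun i => not_lt.2 (hR i)])

theorem exists_criticalRank_le : ∃ i, criticalRank R m ≤ R i := by
  by_contra! hlt
  have := (le_criticalRank_iff hR hm (one_le_criticalRank hR hm)).1 le_rfl
  rw [Set.eq_univ_of_forall (s := {i | R i < criticalRank R m}) hlt, Set.ncard_univ,
    Nat.card_eq_fintype_card] at this
  omega

theorem eq_criticalRank_iff {k : ℕ} (hk : 1 ≤ k) :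
    k = criticalRank R m ↔ {i | R i < k}.ncard ≤ m ∧ m < {i | R i ≤ k}.ncard := by
  have hsucc : {i | R i ≤ k} = {i | R i < k + 1} := by simp only [Nat.lt_succ_iff]
  rw [hsucc, ← not_le, ← le_criticalRank_iff hR hm hk, ← le_criticalRank_iff hR hm (by omega)]
  omega

end CriticalRank

theorem rank_envelope_boundary_general
    {s : ℕ} {ι : Type*} [Fintype ι] [Nonempty ι]
    (T : Fin (s + 1) → ι → ℝ)
    (hnoties : ∀ r : ι, ∀ i j : Fin (s + 1), i ≠ j → T i r ≠ T j r)
    (α : ℝ) (hα1 : α < 1)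
    (m : ℕ) (hm : (m : ℝ) = α * (s + 1))
    (kα : ℕ)
    (hkα : kα = sSup {k : ℕ | 1 ≤ k ∧ {i : Fin (s + 1) | extremeRank T i < k}.ncard ≤ m}) :
    ((∀ r : ι, envLow T kα r ≤ T 0 r ∧ T 0 r ≤ envUpp T kα r) ∧
      (∃ r : ι, T 0 r = envLow T kα r ∨ T 0 r = envUpp T kα r)) ↔
      (({i : Fin (s + 1) | extremeRank T i < extremeRank T 0}.ncard : ℝ) / (s + 1) ≤ α ∧
        α < ({i : Fin (s + 1) | extremeRank T i ≤ extremeRank T 0}.ncard : ℝ) / (s + 1)) := by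
  have hT : ∀ r, Function.Injective (T · r) := fun r i j h =>
    by_contra fun hij => hnoties r i j hij h
  have hpos : (0 : ℝ) < s + 1 := by positivity
  have hms : m < Fintype.card (Fin (s + 1)) := by
    rw [Fintype.card_fin]
    exact_mod_cast (show (m : ℝ) < s + 1 by nlinarith)
  have hR := one_le_extremeRank T
  change kα = criticalRank (extremeRank T) m at hkα
  obtain ⟨i, hi⟩ := exists_criticalRank_le hR hms
  rw [forall_mem_envelope_and_exists_touches_iff hT (hkα ▸ one_le_criticalRank hR hms)
    (hkα ▸ hi.trans (extremeRank_le T i)), hkα, eq_criticalRank_iff hR hms (hR 0),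
    div_le_iff₀ hpos, lt_div_iff₀ hpos, ← hm]
  norm_cast

/-- **Rank envelope test, boundary case.**
The observed curve does not exit the global rank envelope strictly but touches it, i.e.
`T_low^(k_α)(r) ≤ T_1(r) ≤ T_upp^(k_α)(r)` for all `r ∈ I` and `T_1(r) = T_low^(k_α)(r)`
or `T_1(r) = T_upp^(k_α)(r)` for some `r ∈ I`, if and only if `p_- ≤ α < p_+`. -/
theorem rank_envelope_boundary
    {s : ℕ} (hs : 1 ≤ s) {ι : Type*} [Fintype ι] [Nonempty ι]
    (T : Fin (s + 1) → ι → ℝ)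
    (hnoties : ∀ r : ι, ∀ i j : Fin (s + 1), i ≠ j → T i r ≠ T j r)
    (α : ℝ) (hα0 : 0 ≤ α) (hα1 : α < 1)
    (m : ℕ) (hm : (m : ℝ) = α * (s + 1))
    (kα : ℕ)
    (hkα : kα = sSup {k : ℕ | 1 ≤ k ∧ {i : Fin (s + 1) | extremeRank T i < k}.ncard ≤ m}) :
    ((∀ r : ι, envLow T kα r ≤ T 0 r ∧ T 0 r ≤ envUpp T kα r) ∧
      (∃ r : ι, T 0 r = envLow T kα r ∨ T 0 r = envUpp T kα r)) ↔
      (({i : Fin (s + 1) | extremeRank T i < extremeRank T 0}.ncard : ℝ) / (s + 1) ≤ α ∧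
        α < ({i : Fin (s + 1) | extremeRank T i ≤ extremeRank T 0}.ncard : ℝ) / (s + 1)) :=
  rank_envelope_boundary_general T hnoties α hα1 m hm kα hkα
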